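/- arXiv:2601.00048 — 2 statements merged into one kernel-verified Lean document; each statement's English description precedes it below -/
import Mathlib

section
/- Let φ : (P_5)_{18} → (P_5)_{41} be the map u ↦ x_1x_2x_3x_4x_5·u^2. The subspace of Q^{⊗5}_{41} spanned by the classes [φ(u)], where u ranges over the admissible monomials of degree 18 in P_5, is isomorphic as an F_2-vector space to Q^{⊗5}_{18}; moreover Q^{⊗5}_{41} is the direct sum of this subspace and the kernel of Kameko's squaring operation (Sq^0_*)_{(5,41)}. -/
/-!
Kameko's map is induced by the linear map `halve` on `P_m` sending `x^u` to `x^{(u-1)/2}` when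
all `u_i` are odd and to `0` otherwise. Since `halve (f * g^2) = halve f * g`, and every monomial
is a square-free monomial times a square, it commutes with the total square `x_i ↦ x_i + x_i^2`;
comparing homogeneous components, `halve ∘ Sq^{2j} = Sq^j ∘ halve` and `halve ∘ Sq^{2j+1} = 0`,
so it preserves hit polynomials.

The classes of admissible monomials form a basis of `Q^{⊗m}_n`: a minimal monomial whose class is
not in their span would be nonadmissible, hence congruent to a sum of smaller monomials; and a
vanishing sum of admissible classes would make its largest monomial nonadmissible.

Every Kameko map sends `[φ(u)]` to `[u]`, so it maps the spanning family of the subspace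
bijectively onto the admissible basis of `Q^{⊗5}_{18}`. It therefore restricts to an isomorphism
on the subspace, which is then a complement of its kernel.
-/

open MvPolynomial

noncomputable section

/-- The polynomial algebra `P_m = F_2[x_1, …, x_m]`. -/
abbrev PolyF2 (m : ℕ) : Type := MvPolynomial (Fin m) (ZMod 2)

/-- The total Steenrod square, the algebra endomorphism sending each `x_i` to `x_i + x_i^2`. -/
def sqTot (m : ℕ) : PolyF2 m →ₐ[ZMod 2] PolyF2 m :=
  aeval (fun i => X i + X i ^ 2)

/-- The `k`-th Steenrod square `Sq^k : P_m → P_m`: on a homogeneous polynomial of degree `n`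
it is the degree `n + k` homogeneous component of the total square. -/
def SteenrodSq (m k : ℕ) (f : PolyF2 m) : PolyF2 m :=
  ∑ n ∈ Finset.range (f.totalDegree + 1),
    homogeneousComponent (n + k) (sqTot m (homogeneousComponent n f))

/-- The submodule of hit polynomials, `Σ_{k ≥ 1} Sq^k(P_m)`. -/
def hitSubmodule (m : ℕ) : Submodule (ZMod 2) (PolyF2 m) :=
  Submodule.span (ZMod 2) {g | ∃ k, 1 ≤ k ∧ ∃ f, g = SteenrodSq m k f}

/-- The homogeneous component `(P_m)_n` as a submodule. -/
abbrev homogSub (m n : ℕ) : Submodule (ZMod 2) (PolyF2 m) :=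
  homogeneousSubmodule (Fin m) (ZMod 2) n

/-- The cohit space `Q^{⊗m}_n = (P_m)_n / ((P_m)_n ∩ Σ_{k≥1} Sq^k(P_m))`. -/
abbrev CohitQ (m n : ℕ) : Type :=
  homogSub m n ⧸ ((hitSubmodule m).comap (homogSub m n).subtype)

/-- Total degree of a monomial exponent vector. -/
def mdeg {m : ℕ} (u : Fin m →₀ ℕ) : ℕ := ∑ j, u j

lemma monomial_mem_homogSub {m n : ℕ} (u : Fin m →₀ ℕ) (h : mdeg u = n) :
    (monomial u (1 : ZMod 2)) ∈ homogSub m n := by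
  rw [mem_homogeneousSubmodule]
  apply isHomogeneous_monomial
  rw [Finsupp.degree, ← h, mdeg]
  exact Finset.sum_subset (Finset.subset_univ _)
    (fun x _ hx => Finsupp.notMem_support_iff.mp hx)

/-- The class in `Q^{⊗m}_n` of the monomial with exponent vector `u`
(`0` if `u` does not have degree `n`). -/
def clsQ (m n : ℕ) (u : Fin m →₀ ℕ) : CohitQ m n :=
  if h : mdeg u = n then
    Submodule.Quotient.mk ⟨monomial u 1, monomial_mem_homogSub u h⟩
  else 0

/-- `α_t(a)`, the coefficient of `2^t` in the binary expansion of `a`. -/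
def bitAt (a t : ℕ) : ℕ := a / 2 ^ t % 2

/-- The parameter vector of a monomial: `mParam u t = Σ_j α_t(u_j)`
(this is `Param_{t+1}` in 1-based indexing). -/
def mParam {m : ℕ} (u : Fin m →₀ ℕ) : ℕ → ℕ := fun t => ∑ j, bitAt (u j) t

/-- Left-lexicographic strict order on sequences. -/
def seqLt (a b : ℕ → ℕ) : Prop := ∃ i, (∀ j, j < i → a j = b j) ∧ a i < b i

/-- Left-lexicographic strict order on exponent vectors. -/
def expLt {m : ℕ} (u v : Fin m →₀ ℕ) : Prop :=
  ∃ i : Fin m, (∀ j, j < i → u j = v j) ∧ u i < v i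

/-- The linear order on monomials of the same degree : first compare parameter vectors
left-lexicographically, then exponent vectors left-lexicographically. -/
def monLt {m : ℕ} (u v : Fin m →₀ ℕ) : Prop :=
  mdeg u = mdeg v ∧
    (seqLt (mParam u) (mParam v) ∨ (mParam u = mParam v ∧ expLt u v))

/-- A monomial is nonadmissible if it is congruent, modulo hit polynomials,
to a sum of strictly smaller monomials. -/
def Nonadmissible {m : ℕ} (u : Fin m →₀ ℕ) : Prop :=
  ∃ S : Finset (Fin m →₀ ℕ), (∀ v ∈ S, monLt v u) ∧
    monomial u (1 : ZMod 2) + ∑ v ∈ S, monomial v (1 : ZMod 2) ∈ hitSubmodule m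

/-- A monomial is admissible if it is not nonadmissible. -/
def Admissible {m : ℕ} (u : Fin m →₀ ℕ) : Prop := ¬ Nonadmissible u

/-- The degree `Σ_i 2^i ω_i` of a (0-indexed) parameter vector. -/
def degOmega (ω : ℕ →₀ ℕ) : ℕ := ω.sum fun i c => 2 ^ i * c

/-- A parameter vector given by a list (0-indexed). -/
def pfin (l : List ℕ) : ℕ →₀ ℕ :=
  ∑ i ∈ Finset.range l.length, Finsupp.single i (l.getD i 0)

/-- A parameter vector, as a plain sequence, given by a list (0-indexed). -/
def pvec (l : List ℕ) : ℕ → ℕ := fun t => l.getD t 0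

/-- `P_m^{≤ω}`: the span of the monomials of degree `deg ω` with parameter vector `≤ ω`. -/
def PLe (m : ℕ) (ω : ℕ →₀ ℕ) : Submodule (ZMod 2) (PolyF2 m) :=
  Submodule.span (ZMod 2)
    {f | ∃ u : Fin m →₀ ℕ, f = monomial u 1 ∧ mdeg u = degOmega ω ∧
      (mParam u = ⇑ω ∨ seqLt (mParam u) ⇑ω)}

/-- `P_m^{<ω}`: the span of the monomials of degree `deg ω` with parameter vector `< ω`. -/
def PLt (m : ℕ) (ω : ℕ →₀ ℕ) : Submodule (ZMod 2) (PolyF2 m) :=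
  Submodule.span (ZMod 2)
    {f | ∃ u : Fin m →₀ ℕ, f = monomial u 1 ∧ mdeg u = degOmega ω ∧
      seqLt (mParam u) ⇑ω}

/-- The localized cohit space `(Q^{⊗m})^ω = P_m^{≤ω} / (P_m^{≤ω} ∩ (hit + P_m^{<ω}))`. -/
abbrev CohitLoc (m : ℕ) (ω : ℕ →₀ ℕ) : Type :=
  PLe m ω ⧸ ((hitSubmodule m ⊔ PLt m ω).comap (PLe m ω).subtype)

open Classical in
/-- The class `[X]_ω` in `(Q^{⊗m})^ω` of the monomial with exponent vector `u`
(`0` if the monomial does not lie in `P_m^{≤ω}`). -/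
def clsLoc (m : ℕ) (ω : ℕ →₀ ℕ) (u : Fin m →₀ ℕ) : CohitLoc m ω :=
  if h : (monomial u (1 : ZMod 2)) ∈ PLe m ω then
    Submodule.Quotient.mk ⟨monomial u 1, h⟩
  else 0

/-- The action of a matrix on `P_m` by linear substitution of the variables. -/
def matAct (m : ℕ) (g : Matrix (Fin m) (Fin m) (ZMod 2)) : PolyF2 m →ₐ[ZMod 2] PolyF2 m :=
  aeval (fun i => ∑ j, C (g i j) * X j)

/-- A class in `Q^{⊗5}_n` is `GL(5,F_2)`-invariant if it is the class of some `F` such that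
`g·F + F` is hit for every `g ∈ GL(5,F_2)`. -/
def IsGLInv (n : ℕ) (q : CohitQ 5 n) : Prop :=
  ∃ F : homogSub 5 n, Submodule.Quotient.mk F = q ∧
    ∀ g : Matrix.GeneralLinearGroup (Fin 5) (ZMod 2),
      matAct 5 (g : Matrix (Fin 5) (Fin 5) (ZMod 2)) (F : PolyF2 5) + (F : PolyF2 5) ∈
        hitSubmodule 5

/-- A class in `(Q^{⊗5})^ω` is `GL(5,F_2)`-invariant if it is the class of some `F ∈ P_5^{≤ω}`
such that `g·F + F ∈ Σ_{k≥1} Sq^k(P_5) + P_5^{<ω}` for every `g ∈ GL(5,F_2)`. -/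
def IsGLInvLoc (ω : ℕ →₀ ℕ) (q : CohitLoc 5 ω) : Prop :=
  ∃ F : PLe 5 ω, Submodule.Quotient.mk F = q ∧
    ∀ g : Matrix.GeneralLinearGroup (Fin 5) (ZMod 2),
      matAct 5 (g : Matrix (Fin 5) (Fin 5) (ZMod 2)) (F : PolyF2 5) + (F : PolyF2 5) ∈
        hitSubmodule 5 ⊔ PLt 5 ω

/-- A class in `(Q^{⊗5})^ω` is `Σ_5`-invariant if it is the class of some `F ∈ P_5^{≤ω}`
such that `σ·F + F ∈ Σ_{k≥1} Sq^k(P_5) + P_5^{<ω}` for every permutation `σ` of the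
variables. -/
def IsPermInvLoc (ω : ℕ →₀ ℕ) (q : CohitLoc 5 ω) : Prop :=
  ∃ F : PLe 5 ω, Submodule.Quotient.mk F = q ∧
    ∀ σ : Equiv.Perm (Fin 5),
      rename (⇑σ) (F : PolyF2 5) + (F : PolyF2 5) ∈ hitSubmodule 5 ⊔ PLt 5 ω

/-- Halving an (odd) exponent vector: `u ↦ (u - 1)/2` componentwise. -/
def halfExp {m : ℕ} (u : Fin m →₀ ℕ) : Fin m →₀ ℕ :=
  Finsupp.equivFunOnFinite.symm fun i => (u i - 1) / 2

open Classical in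
/-- Kameko's squaring operation `(Sq^0_*)_{(5,41)} : Q^{⊗5}_{41} → Q^{⊗5}_{18}`:
the linear map sending the class of a monomial `x^u` of degree `41` to the class of
`x^{(u-1)/2}` if all the exponents `u_i` are odd, and to `0` otherwise. -/
def IsKameko (ψ : CohitQ 5 41 →ₗ[ZMod 2] CohitQ 5 18) : Prop :=
  ∀ u : Fin 5 →₀ ℕ, mdeg u = 41 →
    ψ (clsQ 5 41 u) = if ∀ i, Odd (u i) then clsQ 5 18 (halfExp u) else 0

/-- Exponent vector from a function. -/
def ev {m : ℕ} (f : Fin m → ℕ) : Fin m →₀ ℕ := Finsupp.equivFunOnFinite.symm f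

end

noncomputable section

/-- `Σ_{k=1}^{K} Sq^k(P_m)`. -/
def hitUpTo (m K : ℕ) : Submodule (ZMod 2) (PolyF2 m) :=
  Submodule.span (ZMod 2) {g | ∃ k, 1 ≤ k ∧ k ≤ K ∧ ∃ f, g = SteenrodSq m k f}

/-- A monomial with parameter vector `ω` (and `2^{r-1} = K` where `r = max{i : ω_i > 0}`)
is strictly nonadmissible if it is congruent, modulo `Σ_{k=1}^{K} Sq^k(P_m) + P_m^{<ω}`,
to a sum of strictly smaller monomials. -/
def StrictlyNonadmissible (m K : ℕ) (ω : ℕ →₀ ℕ) (u : Fin m →₀ ℕ) : Prop :=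
  ∃ S : Finset (Fin m →₀ ℕ), (∀ v ∈ S, monLt v u) ∧
    monomial u (1 : ZMod 2) + ∑ v ∈ S, monomial v (1 : ZMod 2) ∈
      hitUpTo m K ⊔ PLt m ω

end

noncomputable section

/-- The exponent vector of `φ(x^u) = x_1x_2x_3x_4x_5·(x^u)^2`. -/
def phiExp (u : Fin 5 →₀ ℕ) : Fin 5 →₀ ℕ :=
  Finsupp.equivFunOnFinite.symm fun i => 2 * u i + 1

/-- The subspace of `Q^{⊗5}_{41}` spanned by the classes `[φ(u)]` where `u` ranges over the
admissible monomials of degree `18` in `P_5`. -/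
def Wphi : Submodule (ZMod 2) (CohitQ 5 41) :=
  Submodule.span (ZMod 2)
    {q | ∃ u : Fin 5 →₀ ℕ, mdeg u = 18 ∧ Admissible u ∧ q = clsQ 5 41 (phiExp u)}

open Finset

section LinearAlgebra

variable {ι R M N : Type*}

lemma linearIndepOn_zmod_two [AddCommGroup M] [Module (ZMod 2) M] {v : ι → M}
    {s : Set ι} (h : ∀ t : Finset ι, ↑t ⊆ s → t.Nonempty → ∑ i ∈ t, v i ≠ 0) :
    LinearIndepOn (ZMod 2) v s := by
  classical
  have hone : ∀ a : ZMod 2, a ≠ 0 → a = 1 := by decide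
  rw [linearIndepOn_iff']
  intro t g hts hsum i hi
  by_contra hgi
  have hsum' : ∑ j ∈ t, g j • v j = ∑ j ∈ t.filter (g · ≠ 0), v j := by
    rw [sum_filter]
    refine sum_congr rfl fun j _ => ?_
    by_cases hj : g j = 0
    · rw [if_neg (not_not.mpr hj), hj, zero_smul]
    · rw [if_pos hj, hone _ hj, one_smul]
  exact h _ (fun j hj => hts (mem_filter.mp hj).1) ⟨i, mem_filter.mpr ⟨hi, hgi⟩⟩
    (hsum' ▸ hsum)

variable [Ring R] [AddCommGroup M] [Module R M] [AddCommGroup N] [Module R N]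

lemma bijective_domRestrict_span_of_basis {v : ι → M} (f : M →ₗ[R] N)
    (b : Module.Basis ι R N) (hfv : ∀ i, f (v i) = b i) :
    Function.Bijective (f.domRestrict (Submodule.span R (Set.range v))) := by
  have hli : LinearIndependent R v :=
    LinearIndependent.of_comp f (by simpa [Function.comp_def, hfv] using b.linearIndependent)
  have : ((Module.Basis.span hli).equiv b (Equiv.refl ι) : _ →ₗ[R] N) = f.domRestrict _ :=
    (Module.Basis.span hli).ext fun i => by
      rw [LinearEquiv.coe_coe, Module.Basis.equiv_apply, Equiv.refl_apply,
        LinearMap.domRestrict_apply, Module.Basis.span_apply, hfv]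
  rw [← this]
  exact LinearEquiv.bijective _

lemma isCompl_ker_of_bijective_domRestrict {f : M →ₗ[R] N} {W : Submodule R M}
    (hf : Function.Bijective (f.domRestrict W)) : IsCompl W (LinearMap.ker f) := by
  set e := LinearEquiv.ofBijective _ hf
  have h := LinearMap.isCompl_of_proj (f := e.symm.toLinearMap ∘ₗ f) e.symm_apply_apply
  rwa [LinearEquiv.ker_comp] at h

end LinearAlgebra

section AdmissibleBasis

variable {m : ℕ}

lemma degree_eq_mdeg (u : Fin m →₀ ℕ) : u.degree = mdeg u := Finsupp.degree_eq_sum u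

def monKey (u : Fin m →₀ ℕ) : Lex (Lex (ℕ → ℕ) × Lex (Fin m →₀ ℕ)) :=
  toLex (toLex (mParam u), toLex u)

lemma monKey_injective : Function.Injective (monKey (m := m)) := fun _ _ h =>
  toLex.injective (congrArg (fun p => (ofLex p).2) h)

lemma monLt_iff {u v : Fin m →₀ ℕ} :
    monLt u v ↔ mdeg u = mdeg v ∧ monKey u < monKey v := by
  rw [monLt, monKey, monKey, Prod.Lex.lt_iff]
  simp only [ofLex_toLex, EmbeddingLike.apply_eq_iff_eq]
  rfl

lemma mem_finsuppAntidiag_univ_iff {n : ℕ} {u : Fin m →₀ ℕ} :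
    u ∈ (univ : Finset (Fin m)).finsuppAntidiag n ↔ mdeg u = n := by
  simp [mem_finsuppAntidiag, mdeg]

def clsPoly (m n : ℕ) : PolyF2 m →ₗ[ZMod 2] CohitQ m n :=
  (Submodule.mkQ _) ∘ₗ (homogeneousComponent n).codRestrict (homogSub m n)
    (homogeneousComponent_mem n)

lemma clsPoly_of_mem {n : ℕ} {f : PolyF2 m} (hf : f ∈ homogSub m n) :
    clsPoly m n f = Submodule.Quotient.mk ⟨f, hf⟩ := by
  simp only [clsPoly, LinearMap.comp_apply, Submodule.mkQ_apply]
  congr 1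
  ext1
  simp [homogeneousComponent_of_mem hf]

lemma clsPoly_eq_zero_iff {n : ℕ} {f : PolyF2 m} (hf : f ∈ homogSub m n) :
    clsPoly m n f = 0 ↔ f ∈ hitSubmodule m := by
  rw [clsPoly_of_mem hf, Submodule.Quotient.mk_eq_zero]
  rfl

lemma clsPoly_monomial (n : ℕ) (u : Fin m →₀ ℕ) :
    clsPoly m n (monomial u 1) = clsQ m n u := by
  rw [clsQ]
  split_ifs with h
  · exact clsPoly_of_mem _
  · have hu : monomial u (1 : ZMod 2) ∈ homogSub m (mdeg u) := monomial_mem_homogSub u rfl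
    simp [clsPoly, homogeneousComponent_of_mem hu, Ne.symm h]

lemma span_range_clsQ (m n : ℕ) : Submodule.span (ZMod 2) (Set.range (clsQ m n)) = ⊤ := by
  have hsurj : Function.Surjective (clsPoly m n) := fun q => by
    obtain ⟨x, rfl⟩ := Submodule.Quotient.mk_surjective _ q
    exact ⟨x, clsPoly_of_mem x.2⟩
  have hrange :
      Set.range (clsQ m n) = clsPoly m n '' Set.range (basisMonomials (Fin m) (ZMod 2)) := by
    rw [← Set.range_comp, coe_basisMonomials]
    exact congrArg Set.range (funext fun u => (clsPoly_monomial n u).symm)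
  rw [hrange, ← Submodule.map_span, Module.Basis.span_eq, Submodule.map_top,
    LinearMap.range_eq_top.mpr hsurj]

def admissibleExps (m n : ℕ) : Set (Fin m →₀ ℕ) := {u | mdeg u = n ∧ Admissible u}

lemma linearIndepOn_clsQ_admissibleExps (m n : ℕ) :
    LinearIndepOn (ZMod 2) (clsQ m n) (admissibleExps m n) := by
  classical
  refine linearIndepOn_zmod_two fun t ht hne hsum => ?_
  obtain ⟨u, hu, hmax⟩ := t.exists_max_image monKey hne
  have hdeg : ∀ v ∈ t, mdeg v = n := fun v hv => (ht hv).1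
  have hhomog : ∑ v ∈ t, monomial v (1 : ZMod 2) ∈ homogSub m n :=
    Submodule.sum_mem _ fun v hv => monomial_mem_homogSub v (hdeg v hv)
  have hhit : ∑ v ∈ t, monomial v (1 : ZMod 2) ∈ hitSubmodule m := by
    rw [← clsPoly_eq_zero_iff hhomog, map_sum]
    simpa only [clsPoly_monomial] using hsum
  refine (ht hu).2 ⟨t.erase u, fun v hv => monLt_iff.mpr ⟨?_, ?_⟩, ?_⟩
  · rw [hdeg v (mem_of_mem_erase hv), hdeg u hu]
  · exact (hmax v (mem_of_mem_erase hv)).lt_of_ne (monKey_injective.ne (ne_of_mem_erase hv))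
  · rwa [add_sum_erase t (fun v => monomial v (1 : ZMod 2)) hu]

lemma clsQ_mem_span_admissibleExps (m n : ℕ) (u : Fin m →₀ ℕ) :
    clsQ m n u ∈ Submodule.span (ZMod 2) (clsQ m n '' admissibleExps m n) := by
  classical
  set A := Submodule.span (ZMod 2) (clsQ m n '' admissibleExps m n)
  by_contra hu
  have hdeg : mdeg u = n := by_contra fun h => hu (by rw [clsQ, dif_neg h]; exact zero_mem A)
  set B := ((univ : Finset (Fin m)).finsuppAntidiag n).filter fun v => clsQ m n v ∉ A
  obtain ⟨v, hvB, hmin⟩ := B.exists_min_image monKey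
    ⟨u, mem_filter.mpr ⟨mem_finsuppAntidiag_univ_iff.mpr hdeg, hu⟩⟩
  obtain ⟨hvdeg, hv⟩ := mem_filter.mp hvB
  rw [mem_finsuppAntidiag_univ_iff] at hvdeg
  have hnonadm : Nonadmissible v := not_not.mp fun hadm =>
    hv (Submodule.subset_span ⟨v, ⟨hvdeg, hadm⟩, rfl⟩)
  obtain ⟨S, hS, hhit⟩ := hnonadm
  have hSdeg : ∀ w ∈ S, mdeg w = n := fun w hw => (monLt_iff.mp (hS w hw)).1.trans hvdeg
  have hSA : ∀ w ∈ S, clsQ m n w ∈ A := fun w hw => by_contra fun hwA =>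
    (hmin w (mem_filter.mpr ⟨mem_finsuppAntidiag_univ_iff.mpr (hSdeg w hw), hwA⟩)).not_gt
      (monLt_iff.mp (hS w hw)).2
  have hzero : clsQ m n v + ∑ w ∈ S, clsQ m n w = 0 := by
    rw [← clsPoly_monomial, ← (clsPoly_eq_zero_iff (add_mem (monomial_mem_homogSub v hvdeg)
      (Submodule.sum_mem _ fun w hw => monomial_mem_homogSub w (hSdeg w hw)))).mpr hhit,
      map_add, map_sum]
    simp only [clsPoly_monomial]
  exact hv (eq_neg_of_add_eq_zero_left hzero ▸ neg_mem (Submodule.sum_mem _ hSA))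

def admissibleBasis (m n : ℕ) : Module.Basis (admissibleExps m n) (ZMod 2) (CohitQ m n) :=
  Module.Basis.mk (linearIndepOn_clsQ_admissibleExps m n) <| by
    rw [← Set.image_eq_range, ← span_range_clsQ, Submodule.span_le]
    rintro _ ⟨u, rfl⟩
    exact clsQ_mem_span_admissibleExps m n u

lemma admissibleBasis_apply (m n : ℕ) (u : admissibleExps m n) :
    admissibleBasis m n u = clsQ m n u :=
  Module.Basis.mk_apply _ _ _

end AdmissibleBasis

section Kameko

variable {m : ℕ}

def oddExp (w : Fin m →₀ ℕ) : Fin m →₀ ℕ :=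
  Finsupp.equivFunOnFinite.symm fun i => 2 * w i + 1

lemma oddExp_apply (w : Fin m →₀ ℕ) (i : Fin m) : oddExp w i = 2 * w i + 1 := rfl

lemma oddExp_injective : Function.Injective (oddExp (m := m)) := fun w w' h =>
  Finsupp.ext fun i => by
    have := DFunLike.congr_fun h i
    simp only [oddExp_apply] at this
    omega

lemma eq_oddExp_iff {u w : Fin m →₀ ℕ} :
    u = oddExp w ↔ (∀ i, Odd (u i)) ∧ halfExp u = w := by
  constructor
  · rintro rfl
    exact ⟨fun i => by simp [oddExp_apply],
      Finsupp.ext fun i => by simp [halfExp, oddExp_apply]⟩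
  · rintro ⟨hu, rfl⟩
    ext i
    obtain ⟨k, hk⟩ := hu i
    simp [oddExp_apply, halfExp, hk]

lemma mdeg_oddExp (w : Fin m →₀ ℕ) : mdeg (oddExp w) = 2 * mdeg w + m := by
  simp [mdeg, oddExp_apply, sum_add_distrib, mul_sum]

def halve : PolyF2 m →ₗ[ZMod 2] PolyF2 m :=
  (AddMonoidAlgebra.coeffLinearEquiv _).symm.toLinearMap ∘ₗ
    Finsupp.lcomapDomain oddExp oddExp_injective ∘ₗ
      (AddMonoidAlgebra.coeffLinearEquiv _).toLinearMap

lemma coeff_halve (f : PolyF2 m) (w : Fin m →₀ ℕ) : coeff w (halve f) = coeff (oddExp w) f :=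
  rfl

lemma halve_monomial (u : Fin m →₀ ℕ) (c : ZMod 2) :
    halve (monomial u c) = if ∀ i, Odd (u i) then monomial (halfExp u) c else 0 := by
  ext w
  by_cases h : ∀ i, Odd (u i) <;> simp [h, coeff_halve, coeff_monomial, eq_oddExp_iff]

lemma halve_mem_homogSub {n : ℕ} {f : PolyF2 m} (hf : f ∈ homogSub m (2 * n + m)) :
    halve f ∈ homogSub m n := by
  intro w hw
  have hdeg := hf hw
  rw [Pi.one_def, ← Finsupp.degree_eq_weight_one, degree_eq_mdeg] at hdeg ⊢
  rw [mdeg_oddExp] at hdeg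
  omega

lemma halve_homogeneousComponent (n : ℕ) (f : PolyF2 m) :
    halve (homogeneousComponent (2 * n + m) f) = homogeneousComponent n (halve f) := by
  ext w
  simp [coeff_halve, coeff_homogeneousComponent, degree_eq_mdeg, mdeg_oddExp]

lemma halve_homogeneousComponent_of_ne {d : ℕ} (hd : ∀ n, d ≠ 2 * n + m) (f : PolyF2 m) :
    halve (homogeneousComponent d f) = 0 := by
  ext w
  simp [coeff_halve, coeff_homogeneousComponent, degree_eq_mdeg, mdeg_oddExp, (hd _).symm]

lemma halve_monomial_mul_sq (a b : Fin m →₀ ℕ) (c d : ZMod 2) :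
    halve (monomial a c * monomial b d ^ 2) = halve (monomial a c) * monomial b d := by
  have hdd : d ^ 2 = d := ZMod.pow_card d
  have hodd : ∀ i, Odd ((a + 2 • b) i) ↔ Odd (a i) := fun i => by simp [Nat.odd_add]
  rw [monomial_pow, monomial_mul, hdd, halve_monomial, halve_monomial]
  by_cases h : ∀ i, Odd (a i)
  · have hhalf : halfExp (a + 2 • b) = halfExp a + b := by
      ext i
      obtain ⟨k, hk⟩ := h i
      simp [halfExp, hk]
      omega
    rw [if_pos fun i => (hodd i).mpr (h i), if_pos h, monomial_mul, hhalf]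
  · rw [if_neg fun h' => h fun i => (hodd i).mp (h' i), if_neg h, zero_mul]

lemma halve_mul_sq (f g : PolyF2 m) : halve (f * g ^ 2) = halve f * g := by
  induction g using MvPolynomial.induction_on' with
  | monomial b d =>
    induction f using MvPolynomial.induction_on' with
    | monomial a c => exact halve_monomial_mul_sq a b c d
    | add p q hp hq => rw [add_mul, map_add, hp, hq, map_add, add_mul]
  | add p q hp hq => rw [add_pow_char, mul_add, map_add, hp, hq, mul_add]

lemma prod_X_eq_monomial (t : Finset (Fin m)) :
    (∏ i ∈ t, X i : PolyF2 m) = monomial (∑ j ∈ t, Finsupp.single j 1) 1 := by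
  rw [monomial_sum_one]
  rfl

lemma halve_prod_X (t : Finset (Fin m)) :
    halve (∏ i ∈ t, X i : PolyF2 m) = if t = univ then 1 else 0 := by
  classical
  have hexp : ∀ i, (∑ j ∈ t, Finsupp.single j 1) i = if i ∈ t then 1 else 0 := fun i => by
    simp [Finsupp.finsetSum_apply, Finsupp.single_apply]
  rw [prod_X_eq_monomial, halve_monomial]
  by_cases ht : t = univ
  · subst ht
    have hhalf : halfExp (∑ j ∈ (univ : Finset (Fin m)), Finsupp.single j 1) = 0 := by
      ext i
      simp [halfExp, hexp]
    rw [if_pos fun i => by simp [hexp], if_pos rfl, hhalf, monomial_zero', C_1]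
  · obtain ⟨i, hi⟩ : ∃ i, i ∉ t := by simpa [Finset.eq_univ_iff_forall] using ht
    rw [if_neg fun h => by simpa [hexp, hi] using h i, if_neg ht]

lemma halve_sqTot_prod_X (s : Finset (Fin m)) :
    halve (sqTot m (∏ i ∈ s, X i)) = sqTot m (halve (∏ i ∈ s, X i)) := by
  classical
  have hexpand : sqTot m (∏ i ∈ s, X i) =
      ∑ t ∈ s.powerset, (∏ i ∈ t, X i) * (∏ i ∈ s \ t, X i) ^ 2 := by
    simp only [map_prod, sqTot, aeval_X, prod_add, prod_pow]
  rw [hexpand, map_sum]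
  simp only [halve_mul_sq, halve_prod_X, ite_mul, one_mul, zero_mul, sum_ite_eq', mem_powerset]
  by_cases hs : s = univ <;> simp [hs]

lemma halve_sqTot_mul_sq {f : PolyF2 m} (hf : halve (sqTot m f) = sqTot m (halve f))
    (g : PolyF2 m) : halve (sqTot m (f * g ^ 2)) = sqTot m (halve (f * g ^ 2)) := by
  rw [map_mul, map_pow, halve_mul_sq, hf, halve_mul_sq, map_mul]

lemma monomial_eq_prod_X_mul_sq (u : Fin m →₀ ℕ) :
    monomial u (1 : ZMod 2) = (∏ i ∈ univ.filter fun i => Odd (u i), X i) *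
      monomial (Finsupp.equivFunOnFinite.symm fun i => u i / 2) 1 ^ 2 := by
  classical
  rw [prod_X_eq_monomial, monomial_pow, monomial_mul, one_pow, one_mul]
  congr 2
  ext i
  simp [Finsupp.single_apply, Nat.odd_iff]
  split_ifs <;> omega

lemma halve_sqTot (f : PolyF2 m) : halve (sqTot m f) = sqTot m (halve f) := by
  have h : halve ∘ₗ (sqTot m).toLinearMap = (sqTot m).toLinearMap ∘ₗ halve :=
    (basisMonomials (Fin m) (ZMod 2)).ext fun u => by
      simp only [coe_basisMonomials, LinearMap.comp_apply, AlgHom.toLinearMap_apply]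
      rw [monomial_eq_prod_X_mul_sq]
      exact halve_sqTot_mul_sq (halve_sqTot_prod_X _) _
  exact LinearMap.congr_fun h f

lemma steenrodSq_of_mem_homogSub {n : ℕ} (k : ℕ) {g : PolyF2 m} (hg : g ∈ homogSub m n) :
    SteenrodSq m k g = homogeneousComponent (n + k) (sqTot m g) := by
  by_cases h0 : g = 0
  · simp [h0, SteenrodSq]
  have hdeg : g.totalDegree = n := IsHomogeneous.totalDegree hg h0
  rw [SteenrodSq, hdeg, sum_eq_single_of_mem n (self_mem_range_succ n) fun d _ hd => by
    rw [homogeneousComponent_of_mem hg, if_neg hd, map_zero, map_zero],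
    homogeneousComponent_of_mem hg, if_pos rfl]

lemma halve_steenrodSq_mem_hit {k : ℕ} (hk : 1 ≤ k) (f : PolyF2 m) :
    halve (SteenrodSq m k f) ∈ hitSubmodule m := by
  rw [SteenrodSq, map_sum]
  refine Submodule.sum_mem _ fun d _ => ?_
  by_cases hdk : ∃ a, d + k = 2 * a + m
  swap
  · rw [halve_homogeneousComponent_of_ne fun a h => hdk ⟨a, h⟩]
    exact zero_mem _
  obtain ⟨a, ha⟩ := hdk
  rw [ha, halve_homogeneousComponent, halve_sqTot]
  by_cases hd : ∃ b, d = 2 * b + m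
  swap
  · rw [halve_homogeneousComponent_of_ne fun b h => hd ⟨b, h⟩, map_zero, map_zero]
    exact zero_mem _
  obtain ⟨b, rfl⟩ := hd
  obtain ⟨j, rfl⟩ : ∃ j, a = b + j := ⟨a - b, by omega⟩
  rw [halve_homogeneousComponent,
    ← steenrodSq_of_mem_homogSub j (homogeneousComponent_mem b _)]
  exact Submodule.subset_span ⟨j, by omega, _, rfl⟩

lemma hitSubmodule_le_comap_halve : hitSubmodule m ≤ (hitSubmodule m).comap halve :=
  Submodule.span_le.mpr fun _ ⟨_, hk, f, hg⟩ => hg ▸ halve_steenrodSq_mem_hit hk f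

def kamekoQ (m n : ℕ) : CohitQ m (2 * n + m) →ₗ[ZMod 2] CohitQ m n :=
  Submodule.mapQ _ _ (halve.restrict fun _ => halve_mem_homogSub) fun _ hx =>
    hitSubmodule_le_comap_halve hx

lemma kamekoQ_mk {n : ℕ} (x : homogSub m (2 * n + m)) :
    kamekoQ m n (Submodule.Quotient.mk x) =
      Submodule.Quotient.mk ⟨halve x, halve_mem_homogSub x.2⟩ :=
  rfl

lemma kamekoQ_clsQ {n : ℕ} {u : Fin m →₀ ℕ} (hu : mdeg u = 2 * n + m) :
    kamekoQ m n (clsQ m _ u) = if ∀ i, Odd (u i) then clsQ m n (halfExp u) else 0 := by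
  rw [clsQ, dif_pos hu, kamekoQ_mk]
  split_ifs with h
  · have hdeg : mdeg (halfExp u) = n := by
      have := mdeg_oddExp (halfExp u)
      rw [← eq_oddExp_iff.mpr ⟨h, rfl⟩] at this
      omega
    rw [clsQ, dif_pos hdeg]
    congr 1
    ext1
    simp [halve_monomial, h]
  · rw [← Submodule.Quotient.mk_zero]
    congr 1
    ext1
    simp [halve_monomial, h]

lemma isKameko_kamekoQ : IsKameko (kamekoQ 5 18) := fun _ hu => kamekoQ_clsQ hu

end Kameko

lemma Wphi_eq_span : Wphi =
    Submodule.span (ZMod 2) (Set.range fun u : admissibleExps 5 18 => clsQ 5 41 (phiExp u)) := by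
  rw [Wphi]
  congr 1
  ext q
  constructor
  · rintro ⟨u, hdeg, hadm, rfl⟩
    exact ⟨⟨u, hdeg, hadm⟩, rfl⟩
  · rintro ⟨⟨u, hdeg, hadm⟩, rfl⟩
    exact ⟨u, hdeg, hadm, rfl⟩

lemma phiExp_eq_oddExp (u : Fin 5 →₀ ℕ) : phiExp u = oddExp u := rfl

lemma IsKameko.apply_clsQ_phiExp {ψ : CohitQ 5 41 →ₗ[ZMod 2] CohitQ 5 18} (hψ : IsKameko ψ)
    {u : Fin 5 →₀ ℕ} (hu : mdeg u = 18) : ψ (clsQ 5 41 (phiExp u)) = clsQ 5 18 u := by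
  obtain ⟨hodd, hhalf⟩ := eq_oddExp_iff.mp (phiExp_eq_oddExp u)
  rw [hψ _ (by rw [phiExp_eq_oddExp, mdeg_oddExp, hu]), if_pos hodd, hhalf]

lemma IsKameko.bijective_domRestrict {ψ : CohitQ 5 41 →ₗ[ZMod 2] CohitQ 5 18}
    (hψ : IsKameko ψ) : Function.Bijective (ψ.domRestrict Wphi) := by
  rw [Wphi_eq_span]
  exact bijective_domRestrict_span_of_basis ψ (admissibleBasis 5 18) fun u => by
    rw [admissibleBasis_apply, hψ.apply_clsQ_phiExp u.2.1]

/-- The subspace of `Q^{⊗5}_{41}` spanned by the classes `[φ(u)]`, `u` an admissible monomial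
of degree `18`, is isomorphic as an `F_2`-vector space to `Q^{⊗5}_{18}`; moreover
`Q^{⊗5}_{41}` is the direct sum of this subspace and the kernel of Kameko's squaring
operation `(Sq^0_*)_{(5,41)}`. -/
theorem phi_span_iso_and_compl :
    Nonempty (Wphi ≃ₗ[ZMod 2] CohitQ 5 18) ∧
      ∀ ψ : CohitQ 5 41 →ₗ[ZMod 2] CohitQ 5 18, IsKameko ψ →
        IsCompl Wphi (LinearMap.ker ψ) :=
  ⟨⟨LinearEquiv.ofBijective _ isKameko_kamekoQ.bijective_domRestrict⟩,
    fun _ hψ => isCompl_ker_of_bijective_domRestrict hψ.bijective_domRestrict⟩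

end
end

section
/- For every integer m ≥ 7, if X is an admissible monomial of degree 12 in P_m, then Param(X) is one of the seven parameter vectors (4,2,1), (4,4), (6,1,1), (6,3), (8,2), (10,1), (12). -/
open MvPolynomial

/-!
Write `ω = Param(X)`. Since `deg X = 12 < 16`, `ω₀ + 2ω₁ + 4ω₂ + 8ω₃ = 12`. Three kinds of
monomials are nonadmissible:
* `ω₀ = 0`: `X = Y²` is hit, being `Sq^{deg Y} Y`;
* `ω₀ = 2`: `X = x_a x_b y²` with `deg y = 5` is hit by the χ-trick, since
  `χ(Sq⁵) = Sq⁴Sq¹` vanishes in degree `2`;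
* `ω₁ = 0` and `ω₀ < 12`: `X = x_A z⁴` with `z ≠ 1`, and `Sq^{2 deg z}(x_A z²)` is `X` plus
  monomials with fewer odd exponents.

The solutions of the degree equation that survive are exactly the seven vectors listed.
-/

open Finset

namespace MvPolynomial

variable {σ R : Type*} [CommSemiring R]

theorem homogeneousComponent_mul (n : ℕ) (p q : MvPolynomial σ R) :
    homogeneousComponent n (p * q) =
      ∑ x ∈ antidiagonal n, homogeneousComponent x.1 p * homogeneousComponent x.2 q := by
  classical
  ext d
  simp only [coeff_homogeneousComponent, coeff_sum, coeff_mul]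
  rw [sum_comm]
  split_ifs with hd
  · refine sum_congr rfl fun x hx => ?_
    have hdeg : x.1.degree + x.2.degree = n := by
      rw [← hd, ← HasAntidiagonal.mem_antidiagonal.mp hx, map_add]
    rw [sum_eq_single ⟨x.1.degree, x.2.degree⟩] <;> aesop
  · refine (sum_eq_zero fun x hx => sum_eq_zero fun i hi => ?_).symm
    have : x.1.degree + x.2.degree ≠ i.1 + i.2 := by
      rw [← map_add, HasAntidiagonal.mem_antidiagonal.mp hx,
        HasAntidiagonal.mem_antidiagonal.mp hi]
      exact hd
    split_ifs <;> simp_all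

theorem homogeneousComponent_mul_of_isHomogeneous {p : MvPolynomial σ R} {d : ℕ}
    (hp : p.IsHomogeneous d) (n : ℕ) (q : MvPolynomial σ R) :
    homogeneousComponent n (p * q) =
      if d ≤ n then p * homogeneousComponent (n - d) q else 0 := by
  rw [homogeneousComponent_mul]
  simp only [homogeneousComponent_of_mem (mem_homogeneousSubmodule d p |>.mpr hp), ite_mul,
    zero_mul]
  split_ifs with hdn
  · rw [sum_eq_single ⟨d, n - d⟩]
    · simp
    · rintro ⟨i, j⟩ hij hne
      rw [HasAntidiagonal.mem_antidiagonal] at hij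
      rw [if_neg]
      rintro rfl
      exact hne (by simp only [Prod.mk.injEq, true_and]; omega)
    · simp [hdn]
  · refine sum_eq_zero fun x hx => if_neg ?_
    rintro rfl
    exact hdn (HasAntidiagonal.mem_antidiagonal.mp hx ▸ Nat.le_add_right _ _)

theorem homogeneousComponent_X_pow_mul (j : σ) (e n : ℕ) (q : MvPolynomial σ R) :
    homogeneousComponent n (X j ^ e * q) =
      if e ≤ n then X j ^ e * homogeneousComponent (n - e) q else 0 :=
  homogeneousComponent_mul_of_isHomogeneous (by simpa using (isHomogeneous_X R j).pow e) n q

theorem homogeneousComponent_mul_of_totalDegree_le {p q : MvPolynomial σ R} {a b : ℕ}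
    (hp : p.totalDegree ≤ a) (hq : q.totalDegree ≤ b) :
    homogeneousComponent (a + b) (p * q) =
      homogeneousComponent a p * homogeneousComponent b q := by
  rw [homogeneousComponent_mul, sum_eq_single ⟨a, b⟩ _ (by simp)]
  rintro ⟨i, j⟩ hij hne
  rw [HasAntidiagonal.mem_antidiagonal] at hij
  rcases lt_or_ge a i with hi | hi
  · rw [homogeneousComponent_eq_zero _ _ (hp.trans_lt hi), zero_mul]
  · rw [homogeneousComponent_eq_zero j q (hq.trans_lt (by grind)), mul_zero]

theorem homogeneousComponent_prod_of_totalDegree_le {ι : Type*} (s : Finset ι)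
    (f : ι → MvPolynomial σ R) (d : ι → ℕ) (h : ∀ i ∈ s, (f i).totalDegree ≤ d i) :
    homogeneousComponent (∑ i ∈ s, d i) (∏ i ∈ s, f i) =
      ∏ i ∈ s, homogeneousComponent (d i) (f i) := by
  classical
  induction s using Finset.induction_on with
  | empty => simp [homogeneousComponent_zero]
  | insert i s hi ih =>
    rw [sum_insert hi, prod_insert hi, prod_insert hi,
      homogeneousComponent_mul_of_totalDegree_le (h i (mem_insert_self i s)),
      ih fun j hj => h j (mem_insert_of_mem hj)]
    exact (totalDegree_finsetProd s f).trans (sum_le_sum fun j hj => h j (mem_insert_of_mem hj))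

theorem homogeneousComponent_pow_of_totalDegree_le {p : MvPolynomial σ R} {d : ℕ}
    (hp : p.totalDegree ≤ d) (k : ℕ) :
    homogeneousComponent (k * d) (p ^ k) = homogeneousComponent d p ^ k := by
  simpa using homogeneousComponent_prod_of_totalDegree_le (range k) (fun _ => p) (fun _ => d)
    fun _ _ => hp

end MvPolynomial

noncomputable section

variable {m : ℕ}

lemma mdeg_eq_degree (u : Fin m →₀ ℕ) : mdeg u = u.degree := (Finsupp.degree_eq_sum u).symm

lemma mdeg_add (u v : Fin m →₀ ℕ) : mdeg (u + v) = mdeg u + mdeg v := by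
  simp [mdeg_eq_degree]

lemma mdeg_smul (c : ℕ) (u : Fin m →₀ ℕ) : mdeg (c • u) = c * mdeg u := by
  simp [mdeg_eq_degree]

lemma le_mdeg (u : Fin m →₀ ℕ) (j : Fin m) : u j ≤ mdeg u :=
  single_le_sum (fun i _ => Nat.zero_le (u i)) (mem_univ j)

lemma ev_apply (f : Fin m → ℕ) (j : Fin m) : ev f j = f j := rfl

lemma monomial_one_eq_prod (u : Fin m →₀ ℕ) : monomial u (1 : ZMod 2) = ∏ j, X j ^ u j := by
  rw [monomial_eq, C_1, one_mul, Finsupp.prod_fintype _ _ fun _ => pow_zero _]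

lemma one_add_X_pow_two_pow (j : Fin m) (t : ℕ) :
    (1 + X j : PolyF2 m) ^ 2 ^ t = 1 + X j ^ 2 ^ t := by
  simpa using add_pow_char_pow (1 : PolyF2 m) (X j) (p := 2) (n := t)

lemma totalDegree_one_add_X (j : Fin m) : (1 + X j : PolyF2 m).totalDegree ≤ 1 :=
  (totalDegree_add _ _).trans (by simp)

def onePlusXPow (u : Fin m →₀ ℕ) : PolyF2 m := ∏ j, (1 + X j) ^ u j

lemma onePlusXPow_add (u v : Fin m →₀ ℕ) :
    onePlusXPow (u + v) = onePlusXPow u * onePlusXPow v := by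
  simp [onePlusXPow, pow_add, prod_mul_distrib]

lemma onePlusXPow_single (j : Fin m) (k : ℕ) :
    onePlusXPow (Finsupp.single j k) = (1 + X j) ^ k := by
  simp [onePlusXPow, Finsupp.single_apply]

lemma sqTot_monomial (u : Fin m →₀ ℕ) :
    sqTot m (monomial u 1) = monomial u 1 * onePlusXPow u := by
  rw [sqTot, aeval_monomial, map_one, one_mul, Finsupp.prod_fintype _ _ fun _ => pow_zero _,
    monomial_one_eq_prod, onePlusXPow, ← prod_mul_distrib]
  exact prod_congr rfl fun j _ => by rw [← mul_pow]; ring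

lemma steenrodSq_monomial (k : ℕ) (u : Fin m →₀ ℕ) :
    SteenrodSq m k (monomial u 1) = monomial u 1 * homogeneousComponent k (onePlusXPow u) := by
  have hu : (monomial u (1 : ZMod 2)).IsHomogeneous u.degree := isHomogeneous_monomial _ rfl
  rw [SteenrodSq, totalDegree_monomial _ one_ne_zero]
  change ∑ n ∈ range (u.degree + 1), _ = _
  rw [sum_eq_single_of_mem u.degree (mem_range.mpr (Nat.lt_succ_self _))]
  · rw [homogeneousComponent_of_mem ((mem_homogeneousSubmodule _ _).mpr hu), if_pos rfl,
      sqTot_monomial, homogeneousComponent_mul_of_isHomogeneous hu, if_pos (by omega),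
      Nat.add_sub_cancel_left]
  · intro n _ hn
    rw [homogeneousComponent_of_mem ((mem_homogeneousSubmodule _ _).mpr hu), if_neg hn, map_zero,
      map_zero]

lemma homogeneousComponent_zero_onePlusXPow (u : Fin m →₀ ℕ) :
    homogeneousComponent 0 (onePlusXPow u) = 1 := by
  simp [homogeneousComponent_zero, onePlusXPow, ← constantCoeff_eq, map_prod]

lemma homogeneousComponent_mdeg_onePlusXPow (u : Fin m →₀ ℕ) :
    homogeneousComponent (mdeg u) (onePlusXPow u) = monomial u 1 := by
  have h1 (j : Fin m) : homogeneousComponent 1 (1 + X j : PolyF2 m) = X j := by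
    rw [map_add, homogeneousComponent_of_mem
        ((mem_homogeneousSubmodule _ _).mpr (isHomogeneous_X _ j)),
      homogeneousComponent_of_mem ((mem_homogeneousSubmodule 0 _).mpr (isHomogeneous_one _ _))]
    simp
  rw [mdeg, onePlusXPow, homogeneousComponent_prod_of_totalDegree_le]
  · rw [monomial_one_eq_prod]
    refine prod_congr rfl fun j _ => ?_
    simpa [h1] using homogeneousComponent_pow_of_totalDegree_le (totalDegree_one_add_X j) (u j)
  · exact fun j _ => (totalDegree_pow _ _).trans
      (by simpa using Nat.mul_le_mul_left (u j) (totalDegree_one_add_X j))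

lemma steenrodSq_mdeg_monomial (u : Fin m →₀ ℕ) :
    SteenrodSq m (mdeg u) (monomial u 1) = monomial (2 • u) 1 := by
  rw [steenrodSq_monomial, homogeneousComponent_mdeg_onePlusXPow, monomial_mul, one_mul,
    two_smul]

lemma le_of_mem_support_onePlusXPow {u s : Fin m →₀ ℕ} (hs : s ∈ (onePlusXPow u).support) :
    s ≤ u := by
  classical
  intro j
  calc s j ≤ degreeOf j (onePlusXPow u) := monomial_le_degreeOf j hs
    _ ≤ ∑ i, degreeOf j ((1 + X i : PolyF2 m) ^ u i) := degreeOf_prod_le _ _ _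
    _ ≤ ∑ i, u i * (if j = i then 1 else 0) := sum_le_sum fun i _ =>
        (degreeOf_pow_le _ _ _).trans (Nat.mul_le_mul_left _
          ((degreeOf_add_le _ _ _).trans (by simp [degreeOf_X])))
    _ = u j := by simp

lemma even_of_mem_support_onePlusXPow_two_smul {v s : Fin m →₀ ℕ}
    (hs : s ∈ (onePlusXPow (2 • v)).support) (j : Fin m) : Even (s j) := by
  rw [two_smul, onePlusXPow_add, ← sq, ← expand_zmod, mem_support_iff] at hs
  by_contra hodd
  exact hs (coeff_expand_of_not_dvd _ (by rwa [even_iff_two_dvd] at hodd))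

lemma steenrodSq_X_pow_mul_X_pow_mul_monomial (a b : Fin m) (s t k : ℕ) (r : Fin m →₀ ℕ) :
    SteenrodSq m k (monomial (Finsupp.single a (2 ^ s) + Finsupp.single b (2 ^ t) + r) 1) =
      X a ^ 2 ^ s * X b ^ 2 ^ t * monomial r 1 *
        homogeneousComponent k ((1 + X a ^ 2 ^ s) * (1 + X b ^ 2 ^ t) * onePlusXPow r) := by
  rw [steenrodSq_monomial, onePlusXPow_add, onePlusXPow_add, onePlusXPow_single,
    onePlusXPow_single, one_add_X_pow_two_pow, one_add_X_pow_two_pow, X_pow_eq_monomial,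
    X_pow_eq_monomial, monomial_mul, monomial_mul, one_mul, one_mul]

lemma steenrodSq_mem_hit {k : ℕ} (hk : 1 ≤ k) (f : PolyF2 m) :
    SteenrodSq m k f ∈ hitSubmodule m :=
  Submodule.subset_span ⟨k, hk, f, rfl⟩

lemma sum_monomial_one_support (p : PolyF2 m) :
    ∑ v ∈ p.support, monomial v (1 : ZMod 2) = p := by
  conv_rhs => rw [← support_sum_monomial_coeff p]
  refine sum_congr rfl fun v hv => ?_
  have h2 : ∀ c : ZMod 2, c ≠ 0 → c = 1 := by decide
  rw [h2 _ (mem_support_iff.mp hv)]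

lemma nonadmissible_of_add_mem_hit {u : Fin m →₀ ℕ} (R : PolyF2 m)
    (hR : ∀ v ∈ R.support, monLt v u) (h : monomial u 1 + R ∈ hitSubmodule m) :
    Nonadmissible u :=
  ⟨R.support, hR, by rwa [sum_monomial_one_support]⟩

lemma nonadmissible_of_mem_hit {u : Fin m →₀ ℕ} (h : monomial u 1 ∈ hitSubmodule m) :
    Nonadmissible u :=
  nonadmissible_of_add_mem_hit 0 (by simp) (by rwa [add_zero])

lemma monLt_of_mParam_zero_lt {u v : Fin m →₀ ℕ} (hdeg : mdeg v = mdeg u)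
    (h : mParam v 0 < mParam u 0) : monLt v u :=
  ⟨hdeg, Or.inl ⟨0, fun _ hj => absurd hj (Nat.not_lt_zero _), h⟩⟩

lemma mParam_zero (u : Fin m →₀ ℕ) : mParam u 0 = ∑ j, u j % 2 := by
  simp [mParam, bitAt]

lemma mParam_eq_zero_iff {u : Fin m →₀ ℕ} {t : ℕ} :
    mParam u t = 0 ↔ ∀ j, bitAt (u j) t = 0 := by
  simp [mParam, sum_eq_zero_iff]

lemma mod_two_pow_eq_sum_bitAt (n N : ℕ) :
    n % 2 ^ N = ∑ t ∈ range N, 2 ^ t * bitAt n t := by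
  induction N with
  | zero => simp [Nat.mod_one]
  | succ N ih => rw [Nat.mod_pow_succ, ih, sum_range_succ, bitAt]

lemma mdeg_eq_sum_mParam {u : Fin m →₀ ℕ} {N : ℕ} (hu : mdeg u < 2 ^ N) :
    mdeg u = ∑ t ∈ range N, 2 ^ t * mParam u t := by
  simp only [mParam, mul_sum]
  rw [sum_comm]
  conv_lhs => rw [mdeg]
  refine sum_congr rfl fun j _ => ?_
  rw [← mod_two_pow_eq_sum_bitAt, Nat.mod_eq_of_lt ((le_mdeg u j).trans_lt hu)]

lemma mParam_eq_zero_of_mdeg_lt {u : Fin m →₀ ℕ} {t : ℕ} (hu : mdeg u < 2 ^ t) :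
    mParam u t = 0 :=
  mParam_eq_zero_iff.mpr fun j => by
    rw [bitAt, Nat.div_eq_of_lt ((le_mdeg u j).trans_lt hu)]

lemma mParam_eq_pvec_iff {u : Fin m →₀ ℕ} {N : ℕ} {l : List ℕ} (hu : mdeg u < 2 ^ N)
    (hl : l.length ≤ N) : mParam u = pvec l ↔ ∀ t < N, mParam u t = l.getD t 0 := by
  refine ⟨fun h t _ => congrFun h t, fun h => funext fun t => ?_⟩
  rcases lt_or_ge t N with ht | ht
  · exact h t ht
  · rw [mParam_eq_zero_of_mdeg_lt (hu.trans_le (Nat.pow_le_pow_right two_pos ht)), pvec,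
      List.getD_eq_default _ _ (hl.trans ht)]

lemma nonadmissible_of_mParam_zero_eq_zero {u : Fin m →₀ ℕ} (hu : mdeg u ≠ 0)
    (h : mParam u 0 = 0) : Nonadmissible u := by
  set v := ev fun j => u j / 2
  have huv : u = 2 • v := by
    ext j
    have := mParam_eq_zero_iff.mp h j
    simp only [bitAt, pow_zero, Nat.div_one] at this
    simp only [Finsupp.coe_smul, Pi.smul_apply, smul_eq_mul, v, ev_apply]
    omega
  have hv : 1 ≤ mdeg v := by
    rw [huv, mdeg_smul] at hu; omega
  apply nonadmissible_of_mem_hit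
  rw [huv, ← steenrodSq_mdeg_monomial]
  exact steenrodSq_mem_hit hv _

/-- The eight squares below spell out `x_a x_b · Sq⁵ y ≡ χ(Sq⁵)(x_a x_b) · y = 0` modulo hit
elements. -/
lemma monomial_X_mul_X_mul_sq_mem_hit (a b : Fin m) {r : Fin m →₀ ℕ} (hr : mdeg r = 5) :
    monomial (Finsupp.single a 1 + Finsupp.single b 1 + 2 • r) (1 : ZMod 2) ∈
      hitSubmodule m := by
  let g : ℕ → ℕ → PolyF2 m := fun s t =>
    monomial (Finsupp.single a (2 ^ s) + Finsupp.single b (2 ^ t) + r) 1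
  have hy : homogeneousComponent 5 (onePlusXPow r) = monomial r 1 :=
    hr ▸ homogeneousComponent_mdeg_onePlusXPow r
  have key : monomial (Finsupp.single a 1 + Finsupp.single b 1 + 2 • r) 1 =
      SteenrodSq m 5 (g 0 0) + SteenrodSq m 4 (g 1 0) + SteenrodSq m 4 (g 0 1) +
        SteenrodSq m 3 (g 1 1) + SteenrodSq m 2 (g 2 0) + SteenrodSq m 2 (g 0 2) +
        SteenrodSq m 1 (g 2 1) + SteenrodSq m 1 (g 1 2) := by
    simp only [g, steenrodSq_X_pow_mul_X_pow_mul_monomial, add_mul, one_mul, mul_add, map_add,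
      mul_assoc, homogeneousComponent_X_pow_mul]
    norm_num [hy]
    have hL : monomial (Finsupp.single a 1 + Finsupp.single b 1 + 2 • r) (1 : ZMod 2) =
        X a * (X b * monomial (r + r) 1) := by
      rw [two_smul, X, X, monomial_mul, monomial_mul, mul_one, mul_one, add_assoc]
    rw [hL, ← one_mul (1 : ZMod 2), ← monomial_mul, one_mul]
    have h2 : (2 : PolyF2 m) = 0 := CharTwo.two_eq_zero
    have h4 : (4 : PolyF2 m) = 0 := by rw [show (4 : PolyF2 m) = 2 * 2 by norm_num, h2, zero_mul]
    ring_nf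
    simp only [h2, h4, mul_zero, add_zero]
  rw [key]
  repeat' apply add_mem
  all_goals exact steenrodSq_mem_hit (by norm_num) _

lemma nonadmissible_of_mParam_zero_eq_two {u : Fin m →₀ ℕ} (hu : mdeg u = 12)
    (h : mParam u 0 = 2) : Nonadmissible u := by
  classical
  have hcard : #{j | u j % 2 = 1} = 2 := by
    refine Eq.trans ?_ h
    rw [mParam_zero, card_filter]
    exact sum_congr rfl fun j _ => by split_ifs <;> omega
  obtain ⟨a, b, hab, hodd⟩ := card_eq_two.mp hcard
  set r := ev fun j => u j / 2
  have hur : u = Finsupp.single a 1 + Finsupp.single b 1 + 2 • r := by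
    ext j
    have := congrArg (j ∈ ·) hodd
    simp only [mem_filter, mem_univ, true_and, mem_insert, mem_singleton, eq_iff_iff] at this
    simp only [Finsupp.coe_add, Finsupp.coe_smul, Pi.add_apply, Pi.smul_apply, smul_eq_mul,
      Finsupp.single_apply, r, ev_apply]
    split_ifs <;> omega
  have hr : mdeg r = 5 := by
    rw [hur, mdeg_add, mdeg_add, mdeg_smul] at hu
    simp only [mdeg_eq_degree, Finsupp.degree_single] at hu ⊢
    omega
  apply nonadmissible_of_mem_hit
  rw [hur]
  exact monomial_X_mul_X_mul_sq_mem_hit a b hr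

lemma mParam_zero_add_lt {a v s e : Fin m →₀ ℕ} (ha : ∀ j, a j ≤ 1) (hsa : s ≤ a) (hs : s ≠ 0)
    (he : ∀ j, Even (e j)) : mParam (a + 2 • v + (s + e)) 0 < mParam (a + 4 • v) 0 := by
  obtain ⟨j₀, hj₀⟩ : ∃ j, s j ≠ 0 := by
    by_contra! h
    exact hs (Finsupp.ext h)
  have hbit j : (a + 2 • v + (s + e)) j % 2 = a j - s j ∧ (a + 4 • v) j % 2 = a j := by
    have := ha j; have := hsa j; have := Nat.even_iff.mp (he j)
    simp only [Finsupp.coe_add, Finsupp.coe_smul, Pi.add_apply, Pi.smul_apply, smul_eq_mul]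
    omega
  rw [mParam_zero, mParam_zero]
  refine sum_lt_sum (fun j _ => ?_) ⟨j₀, mem_univ _, ?_⟩
  · rw [(hbit j).1, (hbit j).2]; omega
  · rw [(hbit j₀).1, (hbit j₀).2]; have := hsa j₀; omega

/-- `Sq^{2d}(x^a y²) = x^a y⁴ + Σ_{i ≥ 1} Sq^i(x^a) Sq^{2d-i}(y²)` with `d = deg y`; as `x^a` is
squarefree, `Sq^i(x^a)` squares `i` of its variables, and `Sq^{2d-i}(y²)` is a square, so every
term but `x^a y⁴` has fewer odd exponents. -/
theorem nonadmissible_add_four_smul {a v : Fin m →₀ ℕ} (ha : ∀ j, a j ≤ 1) (hv : v ≠ 0) :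
    Nonadmissible (a + 4 • v) := by
  classical
  set k := mdeg (2 • v)
  set R : PolyF2 m := ∑ x ∈ (antidiagonal k).erase (0, k), monomial (a + 2 • v) 1 *
      (homogeneousComponent x.1 (onePlusXPow a) * homogeneousComponent x.2 (onePlusXPow (2 • v)))
  have hSq : SteenrodSq m k (monomial (a + 2 • v) 1) = monomial (a + 4 • v) 1 + R := by
    rw [steenrodSq_monomial, onePlusXPow_add, homogeneousComponent_mul,
      ← add_sum_erase _ _ (by simp : ((0 : ℕ), k) ∈ antidiagonal k), mul_add, mul_sum,
      homogeneousComponent_zero_onePlusXPow, homogeneousComponent_mdeg_onePlusXPow, one_mul,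
      monomial_mul, one_mul, add_assoc, ← add_smul]
  have hk : 1 ≤ k := by
    have : mdeg v ≠ 0 := by rwa [mdeg_eq_degree, Ne, Finsupp.degree_eq_zero_iff]
    rw [show k = 2 * mdeg v from mdeg_smul 2 v]; omega
  refine nonadmissible_of_add_mem_hit R (fun t ht => ?_) (hSq ▸ steenrodSq_mem_hit hk _)
  obtain ⟨x, hx, ht⟩ := mem_biUnion.mp (support_sum ht)
  obtain ⟨hx0, hxk⟩ := mem_erase.mp hx
  rw [HasAntidiagonal.mem_antidiagonal] at hxk
  obtain ⟨w, hw, q, hq, rfl⟩ := mem_add.mp (support_mul _ _ ht)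
  obtain ⟨s, hs, e, he, rfl⟩ := mem_add.mp (support_mul _ _ hq)
  rw [support_monomial, if_neg one_ne_zero, mem_singleton] at hw
  subst hw
  rw [support_homogeneousComponent, mem_filter] at hs he
  have hs0 : s ≠ 0 := by
    rintro rfl
    have hx1 : x.1 = 0 := by rw [← hs.2, map_zero]
    exact hx0 (Prod.ext hx1 (by simp only; omega))
  refine monLt_of_mParam_zero_lt ?_ (mParam_zero_add_lt ha (le_of_mem_support_onePlusXPow hs.1)
    hs0 (even_of_mem_support_onePlusXPow_two_smul he.1))
  simp only [k, mdeg_eq_degree, map_add, map_nsmul, smul_eq_mul] at hxk ⊢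
  omega

lemma nonadmissible_of_mParam_one_eq_zero {u : Fin m →₀ ℕ} (h1 : mParam u 1 = 0)
    (h : mParam u 0 < mdeg u) : Nonadmissible u := by
  have hbit j : u j / 2 % 2 = 0 := by simpa [bitAt] using mParam_eq_zero_iff.mp h1 j
  set v := ev fun j => u j / 4
  have huv : u = ev (fun j => u j % 2) + 4 • v := by
    ext j
    have := hbit j
    simp only [Finsupp.coe_add, Finsupp.coe_smul, Pi.add_apply, Pi.smul_apply, smul_eq_mul, v,
      ev_apply]
    omega
  have hv : v ≠ 0 := by
    intro hv
    refine h.ne ((mParam_zero u).trans (sum_congr rfl fun j _ => ?_))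
    have hj := congrArg (· j) hv
    have := hbit j
    simp only [v, ev_apply, Finsupp.coe_zero, Pi.zero_apply] at hj
    omega
  rw [huv]
  exact nonadmissible_add_four_smul (fun j => Nat.le_of_lt_succ (Nat.mod_lt _ two_pos)) hv

lemma weights_of_deg_twelve {a b c d : ℕ} (h : a + 2 * b + 4 * c + 8 * d = 12) (h0 : a ≠ 0)
    (h2 : a ≠ 2) (h1 : b = 0 → a = 12) :
    ((a = 4 ∧ b = 2) ∧ c = 1) ∧ d = 0 ∨ ((a = 4 ∧ b = 4) ∧ c = 0) ∧ d = 0 ∨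
      ((a = 6 ∧ b = 1) ∧ c = 1) ∧ d = 0 ∨ ((a = 6 ∧ b = 3) ∧ c = 0) ∧ d = 0 ∨
      ((a = 8 ∧ b = 2) ∧ c = 0) ∧ d = 0 ∨ ((a = 10 ∧ b = 1) ∧ c = 0) ∧ d = 0 ∨
      ((a = 12 ∧ b = 0) ∧ c = 0) ∧ d = 0 := by
  obtain rfl : d = 0 := by omega
  obtain rfl | rfl : c = 0 ∨ c = 1 := by omega
  · obtain ⟨rfl, rfl⟩ | ⟨rfl, rfl⟩ | ⟨rfl, rfl⟩ | ⟨rfl, rfl⟩ | ⟨rfl, rfl⟩ :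
        a = 4 ∧ b = 4 ∨ a = 6 ∧ b = 3 ∨ a = 8 ∧ b = 2 ∨ a = 10 ∧ b = 1 ∨ a = 12 ∧ b = 0 := by
      omega
    all_goals simp
  · obtain ⟨rfl, rfl⟩ | ⟨rfl, rfl⟩ : a = 4 ∧ b = 2 ∨ a = 6 ∧ b = 1 := by omega
    all_goals simp

/-- For every `m ≥ 7`, the parameter vector of an admissible monomial of degree `12` in
`P_m` is one of `(4,2,1)`, `(4,4)`, `(6,1,1)`, `(6,3)`, `(8,2)`, `(10,1)`, `(12)`. -/
theorem admissible_deg12_param :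
    ∀ m : ℕ, 7 ≤ m → ∀ u : Fin m →₀ ℕ, mdeg u = 12 → Admissible u →
      mParam u = pvec [4,2,1] ∨ mParam u = pvec [4,4] ∨ mParam u = pvec [6,1,1] ∨
      mParam u = pvec [6,3] ∨ mParam u = pvec [8,2] ∨ mParam u = pvec [10,1] ∨
      mParam u = pvec [12] := by
  intro m _ u hu hadm
  have hu16 : mdeg u < 2 ^ 4 := by rw [hu]; norm_num
  have hsum := mdeg_eq_sum_mParam hu16
  simp only [hu, sum_range_succ, sum_range_zero] at hsum
  have h0 : mParam u 0 ≠ 0 := fun h => hadm (nonadmissible_of_mParam_zero_eq_zero (by omega) h)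
  have h2 : mParam u 0 ≠ 2 := fun h => hadm (nonadmissible_of_mParam_zero_eq_two hu h)
  have h1 : mParam u 1 = 0 → mParam u 0 = 12 := fun h =>
    by_contra fun hne => hadm (nonadmissible_of_mParam_one_eq_zero h (by omega))
  simp (disch := simp) only [mParam_eq_pvec_iff hu16, Nat.forall_lt_succ_right, Nat.not_lt_zero,
    IsEmpty.forall_iff, implies_true, true_and, List.getD_cons_zero, List.getD_cons_succ,
    List.getD_nil]
  exact weights_of_deg_twelve (by omega) h0 h2 h1

end
end
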